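/- Let W ∈ ℝ^{D×D}, ε > 0, and define the ε-smoothed ℓ2 normalization map h : ℝ^D → ℝ^D by h(x) = Wᵀx / √(‖Wᵀx‖₂² + ε). Then h is Lipschitz continuous with respect to the Euclidean norm with constant at most 2 ε^{−1/2} ‖W‖₂, where ‖W‖₂ is the spectral norm of W. -/

import Mathlib

/-!
Write `s(a) = √(‖a‖² + ε) ≥ √ε`. Splitting
`a / s(a) - b / s(b) = (a - b) / s(a) + (1 / s(a) - 1 / s(b)) b`, the first term is at most
`‖a - b‖ / √ε`; so is the second, because `‖b‖ ≤ s(b)` and `t ↦ √(t² + ε)` is 1-Lipschitz.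
Hence the smoothed normalization is `2 / √ε`-Lipschitz, and precomposing with `Wᵀ`, whose
operator norm equals that of `W`, multiplies the constant by `‖W‖₂`.
-/

open Matrix

/-- The spectral norm of a matrix `A`, defined as `sup_{‖x‖₂ = 1} ‖Ax‖₂`. -/
noncomputable def specNorm {M D : ℕ} (A : Matrix (Fin M) (Fin D) ℝ) : ℝ :=
  sSup {c : ℝ | ∃ x : EuclideanSpace ℝ (Fin D), ‖x‖ = 1 ∧
    c = ‖Matrix.toEuclideanLin A x‖}

open scoped Matrix.Norms.L2Operator

lemma specNorm_eq_l2_opNorm {M D : ℕ} (A : Matrix (Fin M) (Fin D) ℝ) : specNorm A = ‖A‖ := by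
  rw [l2_opNorm_def, ← ContinuousLinearMap.sSup_sphere_eq_norm]
  unfold specNorm
  congr 1
  ext c
  simp [eq_comm]

lemma norm_toEuclideanLin_transpose_le {M D : ℕ} (A : Matrix (Fin M) (Fin D) ℝ)
    (x : EuclideanSpace ℝ (Fin M)) :
    ‖toEuclideanLin Aᵀ x‖ ≤ specNorm A * ‖x‖ := by
  rw [specNorm_eq_l2_opNorm, ← conjTranspose_eq_transpose_of_trivial,
    ← l2_opNorm_conjTranspose]
  exact ((toEuclideanLin.trans LinearMap.toContinuousLinearMap) Aᴴ).le_opNorm x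

lemma Real.sqrt_sq_add_le_sqrt_sq_add_add_abs_sub {ε : ℝ} (hε : 0 ≤ ε) (s t : ℝ) :
    √(s ^ 2 + ε) ≤ √(t ^ 2 + ε) + |s - t| := by
  have ht : |t| ≤ √(t ^ 2 + ε) := Real.abs_le_sqrt (by linarith)
  have hcross : t * (s - t) ≤ |t| * |s - t| := by rw [← abs_mul]; exact le_abs_self _
  rw [Real.sqrt_le_iff]
  refine ⟨by positivity, ?_⟩
  nlinarith [Real.sq_sqrt (by positivity : 0 ≤ t ^ 2 + ε), sq_abs (s - t),
    mul_le_mul_of_nonneg_right ht (abs_nonneg (s - t))]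

lemma Real.abs_sqrt_sq_add_sub_sqrt_sq_add_le {ε : ℝ} (hε : 0 ≤ ε) (s t : ℝ) :
    |√(s ^ 2 + ε) - √(t ^ 2 + ε)| ≤ |s - t| := by
  rw [abs_sub_le_iff]
  constructor
  · linarith [Real.sqrt_sq_add_le_sqrt_sq_add_add_abs_sub hε s t]
  · linarith [Real.sqrt_sq_add_le_sqrt_sq_add_add_abs_sub hε t s, abs_sub_comm s t]

section SmoothedNormalize

variable {E : Type*} [SeminormedAddCommGroup E] [NormedSpace ℝ E]

noncomputable def smoothedNormalize (ε : ℝ) (a : E) : E := (√(‖a‖ ^ 2 + ε))⁻¹ • a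

lemma norm_smoothedNormalize_sub_le {ε : ℝ} (hε : 0 < ε) (a b : E) :
    ‖smoothedNormalize ε a - smoothedNormalize ε b‖ ≤ 2 * (√ε)⁻¹ * ‖a - b‖ := by
  set sa := √(‖a‖ ^ 2 + ε)
  set sb := √(‖b‖ ^ 2 + ε)
  have hε' : 0 < √ε := Real.sqrt_pos.mpr hε
  have hsa : √ε ≤ sa := Real.sqrt_le_sqrt (le_add_of_nonneg_left (by positivity))
  have hsb : √ε ≤ sb := Real.sqrt_le_sqrt (le_add_of_nonneg_left (by positivity))
  have hb : ‖b‖ ≤ sb := Real.le_sqrt_of_sq_le (by linarith)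
  have hdiff : |sb - sa| ≤ ‖a - b‖ :=
    (Real.abs_sqrt_sq_add_sub_sqrt_sq_add_le hε.le _ _).trans
      (by rw [norm_sub_rev a b]; exact abs_norm_sub_norm_le b a)
  have hsplit : smoothedNormalize ε a - smoothedNormalize ε b
      = sa⁻¹ • (a - b) + (sa⁻¹ - sb⁻¹) • b := by
    simp only [smoothedNormalize, smul_sub, sub_smul]
    abel
  have hfirst : ‖sa⁻¹ • (a - b)‖ ≤ (√ε)⁻¹ * ‖a - b‖ := by
    rw [norm_smul, norm_inv, Real.norm_of_nonneg (by positivity)]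
    gcongr
  have hsecond : ‖(sa⁻¹ - sb⁻¹) • b‖ ≤ (√ε)⁻¹ * ‖a - b‖ :=
    calc ‖(sa⁻¹ - sb⁻¹) • b‖ = |sb - sa| / sa * (‖b‖ / sb) := by
          rw [norm_smul, inv_sub_inv (by positivity) (by positivity), Real.norm_eq_abs,
            abs_div, abs_of_pos (by positivity : 0 < sa * sb)]
          ring
      _ ≤ ‖a - b‖ / √ε * 1 := by
          gcongr
          exact div_le_one_of_le₀ hb (by positivity)
      _ = (√ε)⁻¹ * ‖a - b‖ := by ring
  calc ‖smoothedNormalize ε a - smoothedNormalize ε b‖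
      ≤ ‖sa⁻¹ • (a - b)‖ + ‖(sa⁻¹ - sb⁻¹) • b‖ := hsplit ▸ norm_add_le _ _
    _ ≤ 2 * (√ε)⁻¹ * ‖a - b‖ := by linarith

end SmoothedNormalize

/-- the ε-smoothed ℓ2 normalization map
`h(x) = Wᵀx / √(‖Wᵀx‖₂² + ε)` is Lipschitz continuous with respect to the Euclidean
norm with constant at most `2 ε^{-1/2} ‖W‖₂`, where `‖W‖₂` is the spectral norm. -/
theorem smoothed_l2_normalization_lipschitz {D : ℕ}
    (W : Matrix (Fin D) (Fin D) ℝ) (ε : ℝ) (hε : 0 < ε) :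
    let h : EuclideanSpace ℝ (Fin D) → EuclideanSpace ℝ (Fin D) :=
      fun x => (Real.sqrt (‖Matrix.toEuclideanLin Wᵀ x‖ ^ 2 + ε))⁻¹ •
        Matrix.toEuclideanLin Wᵀ x
    ∀ x₁ x₂ : EuclideanSpace ℝ (Fin D),
      ‖h x₁ - h x₂‖ ≤ 2 * (Real.sqrt ε)⁻¹ * specNorm W * ‖x₁ - x₂‖ := by
  intro h x₁ x₂
  calc ‖h x₁ - h x₂‖ ≤ 2 * (√ε)⁻¹ * ‖toEuclideanLin Wᵀ (x₁ - x₂)‖ := by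
        rw [map_sub]
        exact norm_smoothedNormalize_sub_le hε _ _
    _ ≤ 2 * (√ε)⁻¹ * (specNorm W * ‖x₁ - x₂‖) := by
        gcongr
        exact norm_toEuclideanLin_transpose_le W _
    _ = 2 * (√ε)⁻¹ * specNorm W * ‖x₁ - x₂‖ := by ring
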